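/- For every L > 0, the probability that the backbone tree of the p-percolated Galton–Watson tree does not branch over one L-level, namely f_p'(q_p)^{⌊L/(p−p_c)⌋}, converges to e^{−m₁ L} as p decreases to p_c; in particular there exist p_d > p_c and constants 0 < a₁ ≤ a₂ < 1 such that a₁ ≤ f_p'(q_p)^{⌊L/(p−p_c)⌋} ≤ a₂ for all p ∈ (p_c, p_d). -/

import Mathlib

/-!
Write `t = p (1 - q_p)`, so that the fixed-point equation reads `f(1 - t) = 1 - t / p` and
`f_p'(q_p) = p f'(1 - t)`. Expanding `f` to third order at `1` turns the fixed-point equation into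
`p m₂ t = 2 (m₁ p - 1) + O(t²)`, and expanding `f'` to second order then gives
`f_p'(q_p) = 2 - m₁ p + O(t²) = 1 - m₁ (p - p_c) + O(t²)`. Since `f` lies below its chord on
`[1 - t, 1]`, where the chord takes the value `1 - s / p` at `1 - s`, the cubic lower bound on `f`
forces `t ≤ C (p - p_c)`. Hence `f_p'(q_p) = 1 - m₁ ε + O(ε²)` with `ε = p - p_c`, and
`(1 - m₁ ε + O(ε²)) ^ ⌊L / ε⌋ → e^{-m₁ L}`.
-/

open Filter Set Topology
open scoped Topology

/-- The probability generating function `f(s) = ∑ₖ aₖ sᵏ` of a distribution `a` on ℕ. -/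
noncomputable def pgf (a : ℕ → ℝ) (s : ℝ) : ℝ := ∑' n, a n * s ^ n

/-- The generating function `f_p(s) = f(ps + 1 - p)` of the binomially `p`-thinned
(percolated) offspring distribution. -/
noncomputable def pgfp (a : ℕ → ℝ) (p s : ℝ) : ℝ := pgf a (p * s + 1 - p)

noncomputable def pgfDeriv (a : ℕ → ℝ) (s : ℝ) : ℝ := ∑' n, a n * (n * s ^ (n - 1))

lemma natCast_mul_natCast_sub_one_nonneg (n : ℕ) : 0 ≤ (n : ℝ) * (n - 1) := by
  rcases n with _ | n
  · simp
  · push_cast; nlinarith [(n.cast_nonneg : (0 : ℝ) ≤ n)]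

lemma natCast_mul_natCast_sub_one_mul_natCast_sub_two_nonneg (n : ℕ) :
    0 ≤ (n : ℝ) * (n - 1) * (n - 2) := by
  rcases n with _ | _ | n
  · simp
  · simp
  · push_cast
    ring_nf
    positivity

lemma one_sub_pow_le (n : ℕ) {t : ℝ} (ht0 : 0 ≤ t) (ht1 : t ≤ 1) :
    (1 - t) ^ n ≤ 1 - n * t + n * (n - 1) / 2 * t ^ 2 := by
  induction n with
  | zero => norm_num
  | succ n ih =>
    have := mul_le_mul_of_nonneg_right ih (sub_nonneg.2 ht1)
    push_cast
    rw [pow_succ (1 - t) n]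
    nlinarith [mul_nonneg (natCast_mul_natCast_sub_one_nonneg n) (pow_nonneg ht0 3)]

lemma le_one_sub_pow (n : ℕ) {t : ℝ} (ht0 : 0 ≤ t) (ht1 : t ≤ 1) :
    1 - n * t + n * (n - 1) / 2 * t ^ 2 - n * (n - 1) * (n - 2) / 6 * t ^ 3 ≤ (1 - t) ^ n := by
  induction n with
  | zero => norm_num
  | succ n ih =>
    have := mul_le_mul_of_nonneg_right ih (sub_nonneg.2 ht1)
    push_cast
    rw [pow_succ (1 - t) n]
    nlinarith [mul_nonneg (natCast_mul_natCast_sub_one_mul_natCast_sub_two_nonneg n)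
      (pow_nonneg ht0 4), mul_nonneg (natCast_mul_natCast_sub_one_nonneg n) (pow_nonneg ht0 4)]

lemma sub_le_natCast_mul_one_sub_pow_pred (n : ℕ) {t : ℝ} (ht : t ≤ 2) :
    n - n * (n - 1) * t ≤ n * (1 - t) ^ (n - 1) := by
  rcases n with _ | n
  · simp
  · have := one_add_mul_le_pow (neg_le_neg ht) n
    rw [mul_neg, ← sub_eq_add_neg, ← sub_eq_add_neg] at this
    push_cast
    nlinarith [(n.cast_nonneg : (0 : ℝ) ≤ n)]

lemma natCast_mul_one_sub_pow_pred_le (n : ℕ) {t : ℝ} (ht0 : 0 ≤ t) (ht1 : t ≤ 1) :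
    n * (1 - t) ^ (n - 1) ≤ n - n * (n - 1) * t + n * (n - 1) * (n - 2) / 2 * t ^ 2 := by
  rcases n with _ | n
  · simp
  · have := one_sub_pow_le n ht0 ht1
    push_cast
    nlinarith [(n.cast_nonneg : (0 : ℝ) ≤ n)]

section Moments

variable {a : ℕ → ℝ} {m₁ m₂ m₃ : ℝ}

lemma mean_sub_one_le_secondFactorialMoment (ha0 : ∀ k, 0 ≤ a k) (ha1 : HasSum a 1)
    (hm1 : HasSum (fun k : ℕ => (k : ℝ) * a k) m₁)
    (hm2 : HasSum (fun k : ℕ => (k : ℝ) * ((k : ℝ) - 1) * a k) m₂) : m₁ - 1 ≤ m₂ := by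
  refine hasSum_le (fun n => ?_) (hm1.sub ha1) hm2
  rw [← sub_one_mul]
  exact mul_le_mul_of_nonneg_right (by nlinarith [sq_nonneg ((n : ℝ) - 1)]) (ha0 n)

lemma thirdFactorialMoment_nonneg (ha0 : ∀ k, 0 ≤ a k)
    (hm3 : HasSum (fun k : ℕ => (k : ℝ) * ((k : ℝ) - 1) * ((k : ℝ) - 2) * a k) m₃) :
    0 ≤ m₃ :=
  hm3.nonneg fun n => mul_nonneg (natCast_mul_natCast_sub_one_mul_natCast_sub_two_nonneg n) (ha0 n)

end Moments

section GeneratingFunction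

variable {a : ℕ → ℝ} {m₁ m₂ m₃ : ℝ}

lemma norm_pgf_term_le (ha0 : ∀ k, 0 ≤ a k) {s : ℝ} (hs : |s| ≤ 1) (n : ℕ) :
    ‖a n * s ^ n‖ ≤ a n := by
  rw [norm_mul, Real.norm_of_nonneg (ha0 n), norm_pow, Real.norm_eq_abs]
  exact mul_le_of_le_one_right (ha0 n) (pow_le_one₀ (abs_nonneg s) hs)

lemma norm_pgfDeriv_term_le (ha0 : ∀ k, 0 ≤ a k) {s : ℝ} (hs : |s| ≤ 1) (n : ℕ) :
    ‖a n * (n * s ^ (n - 1))‖ ≤ n * a n := by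
  rw [norm_mul, norm_mul, Real.norm_of_nonneg (ha0 n), RCLike.norm_natCast, norm_pow,
    Real.norm_eq_abs, mul_left_comm, ← mul_assoc]
  exact mul_le_of_le_one_right (mul_nonneg n.cast_nonneg (ha0 n))
    (pow_le_one₀ (abs_nonneg s) hs)

lemma hasSum_pgf (ha0 : ∀ k, 0 ≤ a k) (hSa : Summable a) {s : ℝ} (hs : |s| ≤ 1) :
    HasSum (fun n => a n * s ^ n) (pgf a s) :=
  (hSa.of_norm_bounded (norm_pgf_term_le ha0 hs)).hasSum

lemma hasSum_pgfDeriv (ha0 : ∀ k, 0 ≤ a k) (hS1 : Summable fun n : ℕ => (n : ℝ) * a n)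
    {s : ℝ} (hs : |s| ≤ 1) : HasSum (fun n => a n * (n * s ^ (n - 1))) (pgfDeriv a s) :=
  (hS1.of_norm_bounded (norm_pgfDeriv_term_le ha0 hs)).hasSum

lemma pgf_one (ha1 : HasSum a 1) : pgf a 1 = 1 := by
  simp [pgf, ha1.tsum_eq]

lemma hasDerivAt_pgf (ha0 : ∀ k, 0 ≤ a k) (hSa : Summable a)
    (hS1 : Summable fun n : ℕ => (n : ℝ) * a n) {s : ℝ} (hs : s ∈ Ioo (-1 : ℝ) 1) :
    HasDerivAt (pgf a) (pgfDeriv a s) s := by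
  have habs : ∀ y ∈ Ioo (-1 : ℝ) 1, |y| ≤ 1 := fun y hy => abs_le.2 ⟨hy.1.le, hy.2.le⟩
  exact hasDerivAt_tsum_of_isPreconnected hS1 isOpen_Ioo isPreconnected_Ioo
    (fun n y _ => (hasDerivAt_pow n y).const_mul (a n))
    (fun n y hy => norm_pgfDeriv_term_le ha0 (habs y hy) n) hs
    (hasSum_pgf ha0 hSa (habs s hs)).summable hs

lemma deriv_pgfp (ha0 : ∀ k, 0 ≤ a k) (hSa : Summable a)
    (hS1 : Summable fun n : ℕ => (n : ℝ) * a n) {p s : ℝ} (hs : p * s + 1 - p ∈ Ioo (-1 : ℝ) 1) :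
    deriv (pgfp a p) s = p * pgfDeriv a (p * s + 1 - p) := by
  have hlin : HasDerivAt (fun s => p * s + 1 - p) p s := by
    simpa using ((hasDerivAt_id s).const_mul p).add_const (1 - p)
  rw [mul_comm]
  exact ((hasDerivAt_pgf ha0 hSa hS1 hs).comp s hlin).deriv

lemma convexOn_pgf (ha0 : ∀ k, 0 ≤ a k) (hSa : Summable a) : ConvexOn ℝ (Icc 0 1) (pgf a) := by
  have habs : ∀ y ∈ Icc (0 : ℝ) 1, |y| ≤ 1 := fun y hy => abs_le.2 ⟨by linarith [hy.1], hy.2⟩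
  refine ⟨convex_Icc 0 1, fun x hx y hy α β hα hβ hαβ => ?_⟩
  have hz := convex_Icc (0 : ℝ) 1 hx hy hα hβ hαβ
  refine hasSum_le (fun n => ?_) (hasSum_pgf ha0 hSa (habs _ hz))
    (((hasSum_pgf ha0 hSa (habs x hx)).mul_left α).add
      ((hasSum_pgf ha0 hSa (habs y hy)).mul_left β))
  have := (convexOn_pow n).2 (mem_Ici.2 hx.1) (mem_Ici.2 hy.1) hα hβ hαβ
  simp only [smul_eq_mul] at this ⊢
  nlinarith [mul_le_mul_of_nonneg_left this (ha0 n)]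

lemma pgf_one_sub_le (ha0 : ∀ k, 0 ≤ a k) (ha1 : HasSum a 1)
    (hm1 : HasSum (fun k : ℕ => (k : ℝ) * a k) m₁)
    (hm2 : HasSum (fun k : ℕ => (k : ℝ) * ((k : ℝ) - 1) * a k) m₂)
    {t : ℝ} (ht0 : 0 ≤ t) (ht1 : t ≤ 1) :
    pgf a (1 - t) ≤ 1 - m₁ * t + m₂ / 2 * t ^ 2 := by
  have hb := (ha1.sub (hm1.mul_right t)).add (hm2.mul_right (t ^ 2 / 2))
  refine hasSum_le (fun n => ?_)
    (hasSum_pgf ha0 ha1.summable (abs_le.2 ⟨by linarith, by linarith⟩))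
    (by convert hb using 1 <;> [ext n; skip] <;> ring)
  nlinarith [mul_le_mul_of_nonneg_left (one_sub_pow_le n ht0 ht1) (ha0 n)]

lemma le_pgf_one_sub (ha0 : ∀ k, 0 ≤ a k) (ha1 : HasSum a 1)
    (hm1 : HasSum (fun k : ℕ => (k : ℝ) * a k) m₁)
    (hm2 : HasSum (fun k : ℕ => (k : ℝ) * ((k : ℝ) - 1) * a k) m₂)
    (hm3 : HasSum (fun k : ℕ => (k : ℝ) * ((k : ℝ) - 1) * ((k : ℝ) - 2) * a k) m₃)
    {t : ℝ} (ht0 : 0 ≤ t) (ht1 : t ≤ 1) :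
    1 - m₁ * t + m₂ / 2 * t ^ 2 - m₃ / 6 * t ^ 3 ≤ pgf a (1 - t) := by
  have hb := ((ha1.sub (hm1.mul_right t)).add (hm2.mul_right (t ^ 2 / 2))).sub
    (hm3.mul_right (t ^ 3 / 6))
  refine hasSum_le (fun n => ?_) (by convert hb using 1 <;> [ext n; skip] <;> ring)
    (hasSum_pgf ha0 ha1.summable (abs_le.2 ⟨by linarith, by linarith⟩))
  nlinarith [mul_le_mul_of_nonneg_left (le_one_sub_pow n ht0 ht1) (ha0 n)]

lemma le_pgfDeriv_one_sub (ha0 : ∀ k, 0 ≤ a k)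
    (hm1 : HasSum (fun k : ℕ => (k : ℝ) * a k) m₁)
    (hm2 : HasSum (fun k : ℕ => (k : ℝ) * ((k : ℝ) - 1) * a k) m₂)
    {t : ℝ} (ht0 : 0 ≤ t) (ht1 : t ≤ 1) :
    m₁ - m₂ * t ≤ pgfDeriv a (1 - t) := by
  refine hasSum_le (fun n => ?_) (hm1.sub (hm2.mul_right t))
    (hasSum_pgfDeriv ha0 hm1.summable (abs_le.2 ⟨by linarith, by linarith⟩))
  nlinarith [mul_le_mul_of_nonneg_left
    (sub_le_natCast_mul_one_sub_pow_pred n (by linarith)) (ha0 n)]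

lemma pgfDeriv_one_sub_le (ha0 : ∀ k, 0 ≤ a k)
    (hm1 : HasSum (fun k : ℕ => (k : ℝ) * a k) m₁)
    (hm2 : HasSum (fun k : ℕ => (k : ℝ) * ((k : ℝ) - 1) * a k) m₂)
    (hm3 : HasSum (fun k : ℕ => (k : ℝ) * ((k : ℝ) - 1) * ((k : ℝ) - 2) * a k) m₃)
    {t : ℝ} (ht0 : 0 ≤ t) (ht1 : t ≤ 1) :
    pgfDeriv a (1 - t) ≤ m₁ - m₂ * t + m₃ / 2 * t ^ 2 := by
  have hb := (hm1.sub (hm2.mul_right t)).add (hm3.mul_right (t ^ 2 / 2))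
  refine hasSum_le (fun n => ?_)
    (hasSum_pgfDeriv ha0 hm1.summable (abs_le.2 ⟨by linarith, by linarith⟩))
    (by convert hb using 1 <;> [ext n; skip] <;> ring)
  nlinarith [mul_le_mul_of_nonneg_left (natCast_mul_one_sub_pow_pred_le n ht0 ht1) (ha0 n)]

end GeneratingFunction

section FixedPoint

variable {a : ℕ → ℝ} {m₁ m₂ m₃ : ℝ}

lemma lt_of_pgf_one_sub_eq (ha0 : ∀ k, 0 ≤ a k) (ha1 : HasSum a 1)
    (hm1 : HasSum (fun k : ℕ => (k : ℝ) * a k) m₁)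
    (hm2 : HasSum (fun k : ℕ => (k : ℝ) * ((k : ℝ) - 1) * a k) m₂)
    (hm3 : HasSum (fun k : ℕ => (k : ℝ) * ((k : ℝ) - 1) * ((k : ℝ) - 2) * a k) m₃)
    {p t s : ℝ} (hp : 0 < p) (ht1 : t ≤ 1) (hfix : pgf a (1 - t) = 1 - t / p) (hs0 : 0 < s)
    (hs : m₁ * p - 1 < p * (m₂ / 2 * s - m₃ / 6 * s ^ 2)) : t < s := by
  by_contra! hst
  have ht0 : 0 < t := hs0.trans_le hst
  have hchord : pgf a (1 - s) ≤ 1 - s / p := by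
    have h := (convexOn_pgf ha0 ha1.summable).2 (x := 1 - t) (y := 1)
      ⟨by linarith, by linarith⟩ ⟨zero_le_one, le_rfl⟩ (div_nonneg hs0.le ht0.le)
      (sub_nonneg.2 ((div_le_one ht0).2 hst)) (add_sub_cancel _ _)
    simp only [smul_eq_mul, hfix, pgf_one ha1] at h
    have harg : s / t * (1 - t) + (1 - s / t) * 1 = 1 - s := by field_simp; ring
    have hval : s / t * (1 - t / p) + (1 - s / t) * 1 = 1 - s / p := by field_simp; ring
    rwa [harg, hval] at h
  have hlo := (le_pgf_one_sub ha0 ha1 hm1 hm2 hm3 hs0.le (hst.trans ht1)).trans hchord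
  have hgap := mul_lt_mul_of_pos_left hs hs0
  have hlo' := mul_le_mul_of_nonneg_left hlo hp.le
  rw [mul_sub p 1 (s / p), mul_div_cancel₀ s hp.ne'] at hlo'
  nlinarith

lemma abs_mul_pgfDeriv_one_sub_sub_le (ha0 : ∀ k, 0 ≤ a k) (ha1 : HasSum a 1)
    (hm1 : HasSum (fun k : ℕ => (k : ℝ) * a k) m₁)
    (hm2 : HasSum (fun k : ℕ => (k : ℝ) * ((k : ℝ) - 1) * a k) m₂)
    (hm3 : HasSum (fun k : ℕ => (k : ℝ) * ((k : ℝ) - 1) * ((k : ℝ) - 2) * a k) m₃)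
    {p t : ℝ} (hp : 0 < p) (ht0 : 0 < t) (ht1 : t ≤ 1) (hfix : pgf a (1 - t) = 1 - t / p) :
    |p * pgfDeriv a (1 - t) - (2 - m₁ * p)| ≤ p * m₃ / 2 * t ^ 2 := by
  have hfix' : p * pgf a (1 - t) = p - t := by
    rw [hfix, mul_sub, mul_div_cancel₀ t hp.ne', mul_one]
  have hup := mul_le_mul_of_nonneg_left (pgf_one_sub_le ha0 ha1 hm1 hm2 ht0.le ht1) hp.le
  have hlo := mul_le_mul_of_nonneg_left (le_pgf_one_sub ha0 ha1 hm1 hm2 hm3 ht0.le ht1) hp.le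
  rw [hfix'] at hup hlo
  have hm₂_lower : 2 * (m₁ * p - 1) ≤ p * m₂ * t :=
    le_of_mul_le_mul_left (by nlinarith) ht0
  have hm₂_upper : p * m₂ * t ≤ 2 * (m₁ * p - 1) + p * m₃ / 3 * t ^ 2 :=
    le_of_mul_le_mul_left (by nlinarith) ht0
  have hD_lower := mul_le_mul_of_nonneg_left (le_pgfDeriv_one_sub ha0 hm1 hm2 ht0.le ht1) hp.le
  have hD_upper :=
    mul_le_mul_of_nonneg_left (pgfDeriv_one_sub_le ha0 hm1 hm2 hm3 ht0.le ht1) hp.le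
  have := mul_nonneg hp.le (mul_nonneg (thirdFactorialMoment_nonneg ha0 hm3) (sq_nonneg t))
  rw [abs_le]
  constructor <;> nlinarith

lemma abs_deriv_pgfp_sub_le (ha0 : ∀ k, 0 ≤ a k) (ha1 : HasSum a 1)
    (hm1 : HasSum (fun k : ℕ => (k : ℝ) * a k) m₁)
    (hm2 : HasSum (fun k : ℕ => (k : ℝ) * ((k : ℝ) - 1) * a k) m₂)
    (hm3 : HasSum (fun k : ℕ => (k : ℝ) * ((k : ℝ) - 1) * ((k : ℝ) - 2) * a k) m₃)
    {p q s : ℝ} (hp0 : 0 < p) (hp1 : p ≤ 1) (hq : q ∈ Ico (0 : ℝ) 1) (hfix : pgfp a p q = q)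
    (hs0 : 0 < s) (hs : m₁ * p - 1 < p * (m₂ / 2 * s - m₃ / 6 * s ^ 2)) :
    |deriv (pgfp a p) q - (2 - m₁ * p)| ≤ m₃ / 2 * s ^ 2 := by
  set t := p * (1 - q) with ht
  have ht0 : 0 < t := mul_pos hp0 (by linarith [hq.2])
  have ht1 : t ≤ 1 := by nlinarith [hq.1]
  have harg : p * q + 1 - p = 1 - t := by ring
  have hfix' : pgf a (1 - t) = 1 - t / p := by
    rw [← harg, ← pgfp, hfix, ht, mul_div_cancel_left₀ _ hp0.ne']
    ring
  have hts : t < s := lt_of_pgf_one_sub_eq ha0 ha1 hm1 hm2 hm3 hp0 ht1 hfix' hs0 hs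
  have := thirdFactorialMoment_nonneg ha0 hm3
  rw [deriv_pgfp ha0 ha1.summable hm1.summable (harg ▸ ⟨by linarith, by linarith⟩), harg]
  calc |p * pgfDeriv a (1 - t) - (2 - m₁ * p)|
    _ ≤ p * m₃ / 2 * t ^ 2 :=
      abs_mul_pgfDeriv_one_sub_sub_le ha0 ha1 hm1 hm2 hm3 hp0 ht0 ht1 hfix'
    _ ≤ 1 * m₃ / 2 * s ^ 2 := by gcongr
    _ = m₃ / 2 * s ^ 2 := by ring

end FixedPoint

section Limits

lemma tendsto_pow_of_tendsto_natCast_mul_sub_one {ι : Type*} {l : Filter ι} {x : ι → ℝ}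
    {N : ι → ℕ} {c : ℝ} (hx : Tendsto x l (𝓝 1))
    (hN : Tendsto (fun i => (N i : ℝ) * (x i - 1)) l (𝓝 c)) :
    Tendsto (fun i => x i ^ N i) l (𝓝 (Real.exp c)) := by
  have hpos : ∀ᶠ i in l, 0 < x i := hx.eventually (lt_mem_nhds one_pos)
  have hN' : Tendsto (fun i => (N i : ℝ) * (1 - (x i)⁻¹)) l (𝓝 c) := by
    have hinv : Tendsto (fun i => (x i)⁻¹) l (𝓝 1) := by simpa using hx.inv₀ one_ne_zero
    refine (mul_one c ▸ hN.mul hinv).congr' ?_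
    filter_upwards [hpos] with i hi
    field_simp
  have hlog : Tendsto (fun i => (N i : ℝ) * Real.log (x i)) l (𝓝 c) := by
    refine tendsto_of_tendsto_of_tendsto_of_le_of_le' hN' hN ?_ ?_ <;>
      filter_upwards [hpos] with i hi <;> gcongr
    exacts [Real.one_sub_inv_le_log_of_pos hi, Real.log_le_sub_one_of_pos hi]
  refine hlog.rexp.congr' ?_
  filter_upwards [hpos] with i hi
  rw [Real.exp_nat_mul, Real.exp_log hi]

lemma tendsto_natFloor_div_sub_mul_sub {c L : ℝ} (hL : 0 ≤ L) :
    Tendsto (fun p => (⌊L / (p - c)⌋₊ : ℝ) * (p - c)) (𝓝[>] c) (𝓝 L) := by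
  have hsub : Tendsto (fun p => p - c) (𝓝[>] c) (𝓝[>] 0) :=
    tendsto_nhdsWithin_iff.2 ⟨tendsto_sub_nhds_zero_iff.2 nhdsWithin_le_nhds,
      eventually_nhdsWithin_of_forall fun p (hp : c < p) => sub_pos.2 hp⟩
  refine ((tendsto_nat_floor_mul_div_atTop hL).comp (tendsto_inv_nhdsGT_zero.comp hsub)).congr
    fun p => ?_
  simp [div_eq_mul_inv]

lemma tendsto_pow_natFloor_div_sub_of_isBigO {x : ℝ → ℝ} {c m L : ℝ} (hL : 0 ≤ L)
    (hx : (fun p => x p - (1 - m * (p - c))) =O[𝓝[>] c] fun p => (p - c) ^ 2) :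
    Tendsto (fun p => x p ^ ⌊L / (p - c)⌋₊) (𝓝[>] c) (𝓝 (Real.exp (-(m * L)))) := by
  have hsub : Tendsto (fun p => p - c) (𝓝[>] c) (𝓝 0) :=
    tendsto_sub_nhds_zero_iff.2 nhdsWithin_le_nhds
  have hslope : Tendsto (fun p => (x p - 1) / (p - c)) (𝓝[>] c) (𝓝 (-m)) := by
    have hrem : (fun p => (x p - (1 - m * (p - c))) / (p - c)) =O[𝓝[>] c] fun p => p - c := by
      refine (hx.mul (Asymptotics.isBigO_refl (fun p => (p - c)⁻¹) _)).congr' ?_ ?_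
      · exact Eventually.of_forall fun p => div_eq_mul_inv _ _
      · filter_upwards [self_mem_nhdsWithin] with p (hp : c < p)
        field_simp [(sub_pos.2 hp).ne']
    refine tendsto_sub_nhds_zero_iff.1 ((hrem.trans_tendsto hsub).congr' ?_)
    filter_upwards [self_mem_nhdsWithin] with p (hp : c < p)
    field_simp [(sub_pos.2 hp).ne']
    ring
  have hx1 : Tendsto x (𝓝[>] c) (𝓝 1) := by
    have h := hslope.mul hsub
    rw [mul_zero] at h
    refine tendsto_sub_nhds_zero_iff.1 (h.congr' ?_)
    filter_upwards [self_mem_nhdsWithin] with p (hp : c < p)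
    field_simp [(sub_pos.2 hp).ne']
  refine tendsto_pow_of_tendsto_natCast_mul_sub_one hx1 ?_
  have hN := (tendsto_natFloor_div_sub_mul_sub hL).mul hslope
  rw [mul_neg, mul_comm L m] at hN
  refine hN.congr' ?_
  filter_upwards [self_mem_nhdsWithin] with p (hp : c < p)
  field_simp [(sub_pos.2 hp).ne']

lemma exists_Ioo_forall_mem_Icc_of_tendsto {f : ℝ → ℝ} {c E : ℝ}
    (hf : Tendsto f (𝓝[>] c) (𝓝 E)) (hE0 : 0 < E) (hE1 : E < 1) :
    ∃ d, c < d ∧ ∃ a₁ a₂ : ℝ, 0 < a₁ ∧ a₁ ≤ a₂ ∧ a₂ < 1 ∧ ∀ p ∈ Ioo c d, f p ∈ Icc a₁ a₂ := by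
  obtain ⟨d, hcd, hd⟩ := mem_nhdsGT_iff_exists_Ioo_subset.1
    (hf (Icc_mem_nhds (by linarith : E / 2 < E) (by linarith : E < (1 + E) / 2)))
  exact ⟨d, hcd, E / 2, (1 + E) / 2, by linarith, by linarith, by linarith, fun p hp => hd hp⟩

end Limits

theorem isBigO_deriv_pgfp_fixedPoint_sub
    {a : ℕ → ℝ} {m₁ m₂ m₃ pc : ℝ} {q : ℝ → ℝ}
    (ha0 : ∀ k, 0 ≤ a k) (ha1 : HasSum a 1)
    (hm1 : HasSum (fun k : ℕ => (k : ℝ) * a k) m₁) (h1m : 1 < m₁)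
    (hm2 : HasSum (fun k : ℕ => (k : ℝ) * ((k : ℝ) - 1) * a k) m₂)
    (hm3 : HasSum (fun k : ℕ => (k : ℝ) * ((k : ℝ) - 1) * ((k : ℝ) - 2) * a k) m₃)
    (hpc : pc = 1 / m₁)
    (hq : ∀ p ∈ Set.Ioc pc 1, q p ∈ Set.Ico (0 : ℝ) 1 ∧ pgfp a p (q p) = q p) :
    (fun p => deriv (pgfp a p) (q p) - (1 - m₁ * (p - pc))) =O[𝓝[>] pc]
      fun p => (p - pc) ^ 2 := by
  have hm1pos : 0 < m₁ := by linarith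
  have hm2pos : 0 < m₂ := by linarith [mean_sub_one_le_secondFactorialMoment ha0 ha1 hm1 hm2]
  have hpc0 : 0 < pc := hpc ▸ one_div_pos.2 hm1pos
  have hpc1 : pc < 1 := by rwa [hpc, div_lt_one hm1pos]
  have hm1pc : m₁ * pc = 1 := by rw [hpc]; field_simp
  set C := 4 * m₁ ^ 2 / m₂ with hC
  have hC0 : 0 < C := div_pos (mul_pos four_pos (pow_pos hm1pos 2)) hm2pos
  -- Hypothesis `hs` of `abs_deriv_pgfp_sub_le` at `s = C (p - pc)`, divided by `p - pc`;
  -- `C` is chosen so that at `p = pc` it reads `m₁ < 2 m₁`.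
  have hgap : ∀ᶠ p in 𝓝[>] pc, m₁ < p * (m₂ / 2 * C - m₃ / 6 * C ^ 2 * (p - pc)) := by
    have hval : pc * (m₂ / 2 * C - m₃ / 6 * C ^ 2 * (pc - pc)) = 2 * m₁ := by
      rw [hC, hpc]; field_simp; ring
    exact nhdsWithin_le_nhds (continuousAt_const.eventually_lt (by fun_prop) (by linarith))
  refine Asymptotics.IsBigO.of_bound (m₃ / 2 * C ^ 2) ?_
  filter_upwards [hgap, Ioo_mem_nhdsGT hpc1] with p hp ⟨hpcp, hp1⟩
  obtain ⟨hqp, hfix⟩ := hq p ⟨hpcp, hp1.le⟩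
  have hε : 0 < p - pc := sub_pos.2 hpcp
  have hs : m₁ * p - 1 < p * (m₂ / 2 * (C * (p - pc)) - m₃ / 6 * (C * (p - pc)) ^ 2) :=
    calc m₁ * p - 1 = (p - pc) * m₁ := by linear_combination hm1pc
      _ < (p - pc) * (p * (m₂ / 2 * C - m₃ / 6 * C ^ 2 * (p - pc))) :=
        mul_lt_mul_of_pos_left hp hε
      _ = _ := by ring
  rw [Real.norm_eq_abs, Real.norm_eq_abs, abs_of_nonneg (sq_nonneg (p - pc)),
    show 1 - m₁ * (p - pc) = 2 - m₁ * p by linear_combination hm1pc]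
  calc _ ≤ m₃ / 2 * (C * (p - pc)) ^ 2 := abs_deriv_pgfp_sub_le ha0 ha1 hm1 hm2 hm3
        (hpc0.trans hpcp) hp1.le hqp hfix (mul_pos hC0 hε) hs
    _ = m₃ / 2 * C ^ 2 * (p - pc) ^ 2 := by ring

/-- For every `L > 0`, the probability that the backbone tree does not branch over one
`L`-level, namely `f_p'(q_p)^⌊L/(p - p_c)⌋`, converges to `e^{-m₁ L}` as `p ↓ p_c`;
in particular it is eventually bounded between constants `0 < a₁ ≤ a₂ < 1`. -/
theorem no_branching_probability_over_level
    (a : ℕ → ℝ) (m₁ m₂ m₃ pc : ℝ) (q : ℝ → ℝ) (L : ℝ) (hL : 0 < L)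
    (ha0 : ∀ k, 0 ≤ a k) (ha1 : HasSum a 1)
    (hm1 : HasSum (fun k : ℕ => (k : ℝ) * a k) m₁) (h1m : 1 < m₁)
    (hm2 : HasSum (fun k : ℕ => (k : ℝ) * ((k : ℝ) - 1) * a k) m₂)
    (hm3 : HasSum (fun k : ℕ => (k : ℝ) * ((k : ℝ) - 1) * ((k : ℝ) - 2) * a k) m₃)
    (hpc : pc = 1 / m₁)
    (hq : ∀ p ∈ Set.Ioc pc 1, q p ∈ Set.Ico (0 : ℝ) 1 ∧ pgfp a p (q p) = q p) :
    Tendsto (fun p => deriv (pgfp a p) (q p) ^ ⌊L / (p - pc)⌋₊) (𝓝[>] pc)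
      (𝓝 (Real.exp (-(m₁ * L)))) ∧
    ∃ pd, pc < pd ∧ ∃ a₁ a₂ : ℝ, 0 < a₁ ∧ a₁ ≤ a₂ ∧ a₂ < 1 ∧
      ∀ p ∈ Set.Ioo pc pd,
        deriv (pgfp a p) (q p) ^ ⌊L / (p - pc)⌋₊ ∈ Set.Icc a₁ a₂ := by
  have hlim := tendsto_pow_natFloor_div_sub_of_isBigO hL.le
    (isBigO_deriv_pgfp_fixedPoint_sub ha0 ha1 hm1 h1m hm2 hm3 hpc hq)
  refine ⟨hlim, exists_Ioo_forall_mem_Icc_of_tendsto hlim (Real.exp_pos _) ?_⟩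
  exact Real.exp_lt_one_iff.2 (neg_neg_of_pos (mul_pos (by linarith) hL))
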